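/- arXiv:2308.09645 — 4 statements merged into one kernel-verified Lean document; each statement's English description precedes it below -/
import Mathlib

section
/- For any finite connected simple graph G, the damage number satisfies dmg(G) ≥ rad(G) − 1. -/
open SimpleGraph

/-!
Formalization of the game of Cops and Robber (one cop, one robber) and the damage number.

Round 0: the cop chooses a starting vertex, then the robber chooses a starting vertex.
In each subsequent round the cop moves to an adjacent vertex or passes, after which the
robber moves to an adjacent vertex or passes.  Strategies are modelled as functions of
the full history of positions (most recent first).
-/

/-- A cop strategy: an initial vertex together with a move function taking the history of
cop positions (most recent first, nonempty) and of robber positions (most recent first)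
to the cop's next position. -/
structure CopStrategy (V : Type*) where
  init : V
  move : List V → List V → V

/-- A robber strategy: an initial vertex chosen in response to the cop's initial vertex,
together with a move function taking the history of cop positions (most recent first,
including the cop's move from the current round) and of robber positions (most recent
first) to the robber's next position. -/
structure RobberStrategy (V : Type*) where
  init : V → V
  move : List V → List V → V

variable {V : Type*}

/-- A cop move function is legal for `G` if from any position it either passes or
moves along an edge of `G`. -/
def LegalCopMove (G : SimpleGraph V) (cs : List V → List V → V) : Prop :=
  ∀ (c : V) (ch rh : List V), cs (c :: ch) rh = c ∨ G.Adj c (cs (c :: ch) rh)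

/-- A robber move function is legal for `G` if from any position it either passes or
moves along an edge of `G`. -/
def LegalRobMove (G : SimpleGraph V) (rs : List V → List V → V) : Prop :=
  ∀ (r : V) (ch rh : List V), rs ch (r :: rh) = r ∨ G.Adj r (rs ch (r :: rh))

/-- A legal cop strategy: every move passes or goes along an edge. -/
def CopStrategy.Legal (G : SimpleGraph V) (CS : CopStrategy V) : Prop :=
  LegalCopMove G CS.move

/-- A legal robber strategy: every move passes or goes along an edge. -/
def RobberStrategy.Legal (G : SimpleGraph V) (RS : RobberStrategy V) : Prop :=
  LegalRobMove G RS.move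

/-- `play CS RS n = (cₙ, rₙ, earlier cop positions, earlier robber positions)`:
the state of the game after round `n`, when the cop plays `CS` and the robber plays `RS`.
In each round the cop moves first, then the robber moves. -/
def play (CS : CopStrategy V) (RS : RobberStrategy V) : ℕ → V × V × List V × List V
  | 0 => (CS.init, RS.init CS.init, [], [])
  | n + 1 =>
    let p := play CS RS n
    let c := CS.move (p.1 :: p.2.2.1) (p.2.1 :: p.2.2.2)
    let r := RS.move (c :: p.1 :: p.2.2.1) (p.2.1 :: p.2.2.2)
    (c, r, p.1 :: p.2.2.1, p.2.1 :: p.2.2.2)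

/-- The cop's position after its move in round `n`. -/
def copPos (CS : CopStrategy V) (RS : RobberStrategy V) (n : ℕ) : V := (play CS RS n).1

/-- The robber's position after its move in round `n`. -/
def robPos (CS : CopStrategy V) (RS : RobberStrategy V) (n : ℕ) : V := (play CS RS n).2.1

/-- The robber damages `v`: at the end of some round `n` the robber occupies `v`, having
never been captured up to that point (neither by moving onto the cop, nor by the cop's
move in any round up to and including round `n + 1`); it then passes or moves in
round `n + 1`, damaging `v`. -/
def Damages (CS : CopStrategy V) (RS : RobberStrategy V) (v : V) : Prop :=
  ∃ n, robPos CS RS n = v ∧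
    ∀ k ≤ n, copPos CS RS k ≠ robPos CS RS k ∧ copPos CS RS (k + 1) ≠ robPos CS RS k

/-- The set of vertices damaged by the robber during the play of `CS` against `RS`. -/
def damageSet (CS : CopStrategy V) (RS : RobberStrategy V) : Set V :=
  {v | Damages CS RS v}

/-- The damage number of `G`: the minimum over legal cop strategies of the maximum over
legal robber strategies of the number of distinct damaged vertices. -/
noncomputable def dmg (G : SimpleGraph V) : ℕ :=
  sInf { n | ∃ CS : CopStrategy V, CS.Legal G ∧
    ∀ RS : RobberStrategy V, RS.Legal G → (damageSet CS RS).ncard ≤ n }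

/-- A cop strategy passes during the first round. -/
def CopStrategy.PassesFirst (CS : CopStrategy V) : Prop :=
  ∀ r : V, CS.move [CS.init] [r] = CS.init

/-- The damage number of `G` when the cop is required to pass during the first round. -/
noncomputable def dmg' (G : SimpleGraph V) : ℕ :=
  sInf { n | ∃ CS : CopStrategy V, CS.Legal G ∧ CS.PassesFirst ∧
    ∀ RS : RobberStrategy V, RS.Legal G → (damageSet CS RS).ncard ≤ n }

/-- The eccentricity of a vertex: the maximum distance from `u` to any vertex. -/
noncomputable def ecc (G : SimpleGraph V) (u : V) : ℕ := sSup (Set.range (G.dist u))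

/-- The radius of a graph: the minimum eccentricity over all vertices. -/
noncomputable def gRadius (G : SimpleGraph V) : ℕ := sInf (Set.range (ecc G))

/-!
Whatever the cop does, after `k` rounds it is within distance `k` of its start `c₀`. Let `u` be a
vertex at distance `d = ecc c₀ ≥ rad G` from `c₀`. A robber that starts two steps along a
geodesic from `c₀` to `u` and advances one step per round is at distance `k + 2` from `c₀`
after round `k`, so it cannot be caught before reaching `u`, and it damages the `d - 1`
vertices of the geodesic at distance `2, …, d` from `c₀`.
-/

namespace SimpleGraph

variable {G : SimpleGraph V}

lemma dist_le_of_forall_eq_or_adj {f : ℕ → V}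
    (hf : ∀ n, f (n + 1) = f n ∨ G.Adj (f n) (f (n + 1))) (n : ℕ) :
    G.dist (f 0) (f n) ≤ n := by
  induction n with
  | zero => simp
  | succ n ih =>
    obtain ⟨hreach, hstep⟩ : G.Reachable (f n) (f (n + 1)) ∧ G.dist (f n) (f (n + 1)) ≤ 1 := by
      rcases hf n with h | h
      · simp [h]
      · exact ⟨h.reachable, (dist_eq_one_iff_adj.2 h).le⟩
    have := hreach.dist_triangle_right (f 0)
    omega

namespace Walk

variable {u v : V}

lemma getVert_succ_eq_or_adj (p : G.Walk u v) (i : ℕ) :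
    p.getVert (i + 1) = p.getVert i ∨ G.Adj (p.getVert i) (p.getVert (i + 1)) := by
  by_cases hi : i < p.length
  · exact Or.inr (p.adj_getVert_succ hi)
  · left
    rw [p.getVert_of_length_le (by omega), p.getVert_of_length_le (by omega)]

lemma dist_getVert_of_length_eq_dist (p : G.Walk u v) (hp : p.length = G.dist u v) {i : ℕ}
    (hi : i ≤ p.length) : G.dist u (p.getVert i) = i := by
  have hstart : G.dist u (p.getVert i) ≤ i := by
    simpa [take_length, hi] using dist_le (p.take i)
  have hend : G.dist (p.getVert i) v ≤ p.length - i := by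
    simpa [drop_length] using dist_le (p.drop i)
  have := (p.take i).reachable.dist_triangle_left v
  omega

end Walk

end SimpleGraph

lemma length_robberHistory_play (CS : CopStrategy V) (RS : RobberStrategy V) (n : ℕ) :
    (play CS RS n).2.2.2.length = n := by
  induction n with
  | zero => rfl
  | succ n ih => simp [play, ih]

lemma dist_copPos_le {G : SimpleGraph V} {CS : CopStrategy V} (hCS : CS.Legal G)
    (RS : RobberStrategy V) (n : ℕ) : G.dist CS.init (copPos CS RS n) ≤ n :=
  dist_le_of_forall_eq_or_adj (f := copPos CS RS) (fun _ => hCS _ _ _) n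

namespace RobberStrategy

/-- The robber ignores the cop and stands at `q n` after round `n`. Since legality is required
on every history, off the route the robber passes. -/
def follow [DecidableEq V] (q : ℕ → V) : RobberStrategy V where
  init _ := q 0
  move _ rh := match rh with
    | [] => q 0
    | r :: rh => if r = q rh.length then q (rh.length + 1) else r

lemma follow_legal [DecidableEq V] {G : SimpleGraph V} {q : ℕ → V}
    (hq : ∀ n, q (n + 1) = q n ∨ G.Adj (q n) (q (n + 1))) : (follow q).Legal G := by
  intro r _ rh
  change (if r = q rh.length then q (rh.length + 1) else r) = r ∨
    G.Adj r (if r = q rh.length then q (rh.length + 1) else r)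
  split_ifs with hr
  · subst hr
    exact hq rh.length
  · exact Or.inl rfl

lemma robPos_follow [DecidableEq V] (CS : CopStrategy V) (q : ℕ → V) (n : ℕ) :
    robPos CS (follow q) n = q n := by
  induction n with
  | zero => rfl
  | succ n ih =>
    change (if robPos CS (follow q) n = q (play CS (follow q) n).2.2.2.length
      then q ((play CS (follow q) n).2.2.2.length + 1) else robPos CS (follow q) n) = q (n + 1)
    rw [length_robberHistory_play, if_pos ih]

end RobberStrategy

open RobberStrategy in
lemma exists_robber_dist_sub_one_le_ncard_damageSet [Finite V] {G : SimpleGraph V}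
    {CS : CopStrategy V} (hCS : CS.Legal G) {u : V} (hu : G.Reachable CS.init u) :
    ∃ RS : RobberStrategy V, RS.Legal G ∧ G.dist CS.init u - 1 ≤ (damageSet CS RS).ncard := by
  classical
  obtain ⟨p, hp⟩ := hu.exists_walk_length_eq_dist
  set d := G.dist CS.init u
  let q i := p.getVert (i + 2)
  refine ⟨follow q, follow_legal fun n => p.getVert_succ_eq_or_adj (n + 2), ?_⟩
  have hrob : ∀ k, k + 2 ≤ d → G.dist CS.init (robPos CS (follow q) k) = k + 2 := by
    intro k hk
    rw [robPos_follow]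
    exact p.dist_getVert_of_length_eq_dist hp (by omega)
  have hsafe : ∀ k, k + 2 ≤ d → copPos CS (follow q) k ≠ robPos CS (follow q) k ∧
      copPos CS (follow q) (k + 1) ≠ robPos CS (follow q) k := by
    intro k hk
    have hk₀ := dist_copPos_le hCS (follow q) k
    have hk₁ := dist_copPos_le hCS (follow q) (k + 1)
    have hr := hrob k hk
    constructor
    · intro h; rw [h] at hk₀; omega
    · intro h; rw [h] at hk₁; omega
  calc d - 1 = ((Finset.range (d - 1) : Finset ℕ) : Set ℕ).ncard := by simp
    _ ≤ (damageSet CS (follow q)).ncard := by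
      refine Set.ncard_le_ncard_of_injOn (robPos CS (follow q)) ?_ ?_ (Set.toFinite _)
      · intro k hk
        simp only [Finset.coe_range, Set.mem_Iio] at hk
        exact ⟨k, rfl, fun j hj => hsafe j (by omega)⟩
      · intro i hi j hj hij
        simp only [Finset.coe_range, Set.mem_Iio] at hi hj
        have := hrob i (by omega)
        rw [hij, hrob j (by omega)] at this
        omega

lemma le_dmg_of_forall_exists_robber [Finite V] [Nonempty V] {G : SimpleGraph V} {m : ℕ}
    (h : ∀ CS : CopStrategy V, CS.Legal G →
      ∃ RS : RobberStrategy V, RS.Legal G ∧ m ≤ (damageSet CS RS).ncard) :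
    m ≤ dmg G := by
  let v := Classical.arbitrary V
  refine le_csInf ⟨Nat.card V, ⟨v, fun ch _ => ch.headD v⟩, fun _ _ _ => Or.inl rfl,
    fun RS _ => Set.ncard_le_card _⟩ ?_
  rintro n ⟨CS, hCS, hbound⟩
  obtain ⟨RS, hRS, hm⟩ := h CS hCS
  exact hm.trans (hbound RS hRS)

lemma exists_dist_eq_ecc [Finite V] (G : SimpleGraph V) (v : V) : ∃ u, G.dist v u = ecc G v :=
  Nat.sSup_mem (Set.range_nonempty_iff_nonempty.2 ⟨v⟩) (Set.finite_range _).bddAbove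

lemma gRadius_le_ecc (G : SimpleGraph V) (v : V) : gRadius G ≤ ecc G v :=
  Nat.sInf_le ⟨v, rfl⟩

/-- For any finite connected simple graph `G`, `dmg(G) ≥ rad(G) - 1`. -/
theorem dmg_ge_radius_sub_one {V : Type*} [Fintype V] (G : SimpleGraph V)
    (hG : G.Connected) : gRadius G - 1 ≤ dmg G := by
  have := hG.nonempty
  apply le_dmg_of_forall_exists_robber
  intro CS hCS
  obtain ⟨u, hu⟩ := exists_dist_eq_ecc G CS.init
  obtain ⟨RS, hRS, hdamage⟩ := exists_robber_dist_sub_one_le_ncard_damageSet hCS (hG CS.init u)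
  have := gRadius_le_ecc G CS.init
  exact ⟨RS, hRS, le_trans (by omega) hdamage⟩
end

section
/- If G and H are finite simple graphs each with no isolated vertices, then the Cartesian product G □ H contains no c-dominated vertices; that is, there is no vertex (x,y) of G □ H for which a different vertex (u,v) satisfies N[(x,y)] ⊆ N[(u,v)]. -/
open SimpleGraph

variable {V : Type*}

/-- A vertex `a` is c-dominated if some other vertex `b` satisfies `N[a] ⊆ N[b]`. -/
def CDominated (G : SimpleGraph V) (a : V) : Prop :=
  ∃ b, b ≠ a ∧ insert a (G.neighborSet a) ⊆ insert b (G.neighborSet b)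

/-!
If `N[(x, y)] ⊆ N[(u, v)]` with `(u, v) ≠ (x, y)`, then `(u, v)` is a neighbour of `(x, y)`, say
`(u, y)` with `u ~ x`. Since `H` has no isolated vertices, `(x, y)` has a neighbour `(x, y')`; it
differs from `(u, y)` in both coordinates, so it is neither equal nor adjacent to `(u, y)`.
The case `(x, v)` with `v ~ y` is symmetric.
-/

theorem cDominated_iff {G : SimpleGraph V} {a : V} :
    CDominated G a ↔ ∃ b, G.Adj b a ∧ ∀ c, G.Adj a c → c = b ∨ G.Adj b c := by
  constructor
  · rintro ⟨b, hne, hsub⟩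
    exact ⟨b, (hsub (Set.mem_insert a _)).resolve_left hne.symm,
      fun c hc => hsub (Set.mem_insert_of_mem a hc)⟩
  · rintro ⟨b, hab, hN⟩
    exact ⟨b, hab.ne, Set.insert_subset_iff.2 ⟨Set.mem_insert_of_mem b hab, hN⟩⟩

namespace SimpleGraph

variable {α β : Type*} {G : SimpleGraph α} {H : SimpleGraph β}

theorem boxProd_not_adj_of_ne_of_ne {a a' : α} {b b' : β} (ha : a ≠ a') (hb : b ≠ b') :
    ¬ (G □ H).Adj (a, b) (a', b') := by
  rintro (⟨-, h⟩ | ⟨-, h⟩)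
  exacts [hb h, ha h]

end SimpleGraph

theorem boxProd_no_cDominated_general {α β : Type*}
    (G : SimpleGraph α) (H : SimpleGraph β)
    (hG : ∀ a : α, ∃ a' : α, G.Adj a a') (hH : ∀ b : β, ∃ b' : β, H.Adj b b') :
    ∀ p : α × β, ¬ CDominated (G □ H) p := by
  rintro ⟨x, y⟩ hdom
  obtain ⟨⟨u, v⟩, hadj, hN⟩ := cDominated_iff.1 hdom
  rcases boxProd_adj.1 hadj with ⟨hux, rfl⟩ | ⟨hvy, rfl⟩
  · obtain ⟨y', hyy'⟩ := hH v
    rcases hN (x, y') (boxProd_adj_right.2 hyy') with h | h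
    · exact hux.ne (congrArg Prod.fst h).symm
    · exact boxProd_not_adj_of_ne_of_ne hux.ne hyy'.ne h
  · obtain ⟨x', hxx'⟩ := hG u
    rcases hN (x', y) (boxProd_adj_left.2 hxx') with h | h
    · exact hvy.ne (congrArg Prod.snd h).symm
    · exact boxProd_not_adj_of_ne_of_ne hxx'.ne hvy.ne h

/-- If `G` and `H` are finite simple graphs with no isolated vertices, then `G □ H`
contains no c-dominated vertices. -/
theorem boxProd_no_cDominated {α β : Type*} [Fintype α] [Fintype β]
    (G : SimpleGraph α) (H : SimpleGraph β)
    (hG : ∀ a : α, ∃ a' : α, G.Adj a a') (hH : ∀ b : β, ∃ b' : β, H.Adj b b') :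
    ∀ p : α × β, ¬ CDominated (G □ H) p :=
  boxProd_no_cDominated_general G H hG hH
end

section
/- If G and H are finite connected simple graphs that both contain a universal vertex, then dmg(G □ H) ≤ min{|V(G)|, |V(H)|}. -/
open SimpleGraph

variable {V : Type*}

/-!
Let `u` and `v` be universal vertices of `G` and `H`. The cop starts at `(u, v)` and, whenever
it cannot capture the robber, moves to `(u, y)` where `y` is the robber's `H`-coordinate. From
there every vertex `(x, y)` is within reach, so an uncaptured robber can only ever move inside
`H`: its `G`-coordinate never changes and all damage lies in one copy of `H`, giving
`dmg (G □ H) ≤ |V(H)|`. The bound `|V(G)|` follows by the symmetry `G □ H ≃g H □ G`.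
-/

lemma RobberStrategy.Legal.robPos_succ {G : SimpleGraph V} {RS : RobberStrategy V}
    (hRS : RS.Legal G) (CS : CopStrategy V) (n : ℕ) :
    robPos CS RS (n + 1) = robPos CS RS n ∨ G.Adj (robPos CS RS n) (robPos CS RS (n + 1)) :=
  hRS _ _ _

section Isomorphism

variable {W : Type*}

namespace CopStrategy

def map (e : V ≃ W) (CS : CopStrategy V) : CopStrategy W :=
  ⟨e CS.init, fun ch rh => e (CS.move (ch.map e.symm) (rh.map e.symm))⟩

lemma Legal.map {G : SimpleGraph V} {G' : SimpleGraph W} {CS : CopStrategy V}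
    (h : CS.Legal G) (e : G ≃g G') : (CS.map e.toEquiv).Legal G' := by
  intro c ch rh
  have hc : CS.move (e.symm c :: ch.map e.symm) (rh.map e.symm) = e.symm c ∨
      G.Adj (e.symm c) (CS.move (e.symm c :: ch.map e.symm) (rh.map e.symm)) := h _ _ _
  rw [← e.map_adj_iff, e.apply_symm_apply, ← e.apply_eq_iff_eq, e.apply_symm_apply] at hc
  exact hc

end CopStrategy

namespace RobberStrategy

def map (e : V ≃ W) (RS : RobberStrategy V) : RobberStrategy W :=
  ⟨fun c => e (RS.init (e.symm c)), fun ch rh => e (RS.move (ch.map e.symm) (rh.map e.symm))⟩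

lemma Legal.map {G : SimpleGraph V} {G' : SimpleGraph W} {RS : RobberStrategy V}
    (h : RS.Legal G) (e : G ≃g G') : (RS.map e.toEquiv).Legal G' := by
  intro r ch rh
  have hr : RS.move (ch.map e.symm) (e.symm r :: rh.map e.symm) = e.symm r ∨
      G.Adj (e.symm r) (RS.move (ch.map e.symm) (e.symm r :: rh.map e.symm)) := h _ _ _
  rw [← e.map_adj_iff, e.apply_symm_apply, ← e.apply_eq_iff_eq, e.apply_symm_apply] at hr
  exact hr

end RobberStrategy

lemma play_map (e : V ≃ W) (CS : CopStrategy V) (RS : RobberStrategy W) (n : ℕ) :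
    play (CS.map e) RS n =
      Prod.map e (Prod.map e (Prod.map (List.map e) (List.map e))) (play CS (RS.map e.symm) n) := by
  induction n with
  | zero => simp [play, CopStrategy.map, RobberStrategy.map]
  | succ n ih =>
    rw [play, ih]
    simp [play, CopStrategy.map, RobberStrategy.map, List.map_map]

lemma damageSet_map (e : V ≃ W) (CS : CopStrategy V) (RS : RobberStrategy W) :
    damageSet (CS.map e) RS = e '' damageSet CS (RS.map e.symm) := by
  ext w
  simp [damageSet, Damages, copPos, robPos, play_map, e.eq_symm_apply]

lemma exists_damage_bound_of_iso {G : SimpleGraph V} {G' : SimpleGraph W} (e : G ≃g G') {n : ℕ}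
    (h : ∃ CS : CopStrategy V, CS.Legal G ∧
      ∀ RS : RobberStrategy V, RS.Legal G → (damageSet CS RS).ncard ≤ n) :
    ∃ CS : CopStrategy W, CS.Legal G' ∧
      ∀ RS : RobberStrategy W, RS.Legal G' → (damageSet CS RS).ncard ≤ n := by
  obtain ⟨CS, hCS, hbound⟩ := h
  refine ⟨CS.map e.toEquiv, hCS.map e, fun RS hRS => ?_⟩
  rw [damageSet_map, Set.ncard_image_of_injective _ e.toEquiv.injective]
  exact hbound _ (hRS.map e.symm)

lemma dmg_congr {G : SimpleGraph V} {G' : SimpleGraph W} (e : G ≃g G') : dmg G = dmg G' :=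
  congrArg sInf <| Set.ext fun _ =>
    ⟨exists_damage_bound_of_iso e, exists_damage_bound_of_iso e.symm⟩

end Isomorphism

namespace CopStrategy

open Classical in
noncomputable def greedyStep (G : SimpleGraph V) (f : V → V → V) (c r : V) : V :=
  if r = c ∨ G.Adj c r then r else if f c r = c ∨ G.Adj c (f c r) then f c r else c

noncomputable def greedy (G : SimpleGraph V) (c₀ : V) (f : V → V → V) : CopStrategy V where
  init := c₀
  move
    | c :: _, r :: _ => greedyStep G f c r
    -- histories of these shapes never occur in a play
    | c :: _, [] => c
    | [], _ => c₀

variable {G : SimpleGraph V} {c₀ : V} {f : V → V → V}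

lemma greedyStep_eq_or_adj (c r : V) : greedyStep G f c r = c ∨ G.Adj c (greedyStep G f c r) := by
  unfold greedyStep
  split_ifs with hr hf
  exacts [hr, hf, Or.inl rfl]

lemma greedyStep_of_near {c r : V} (h : r = c ∨ G.Adj c r) : greedyStep G f c r = r :=
  if_pos h

lemma greedyStep_of_not_near {c r : V} (h : ¬(r = c ∨ G.Adj c r))
    (hf : f c r = c ∨ G.Adj c (f c r)) : greedyStep G f c r = f c r := by
  rw [greedyStep, if_neg h, if_pos hf]

lemma greedy_legal : (greedy G c₀ f).Legal G := by
  intro c ch rh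
  cases rh with
  | nil => exact Or.inl rfl
  | cons r rh => exact greedyStep_eq_or_adj c r

lemma copPos_succ_greedy (RS : RobberStrategy V) (n : ℕ) :
    copPos (greedy G c₀ f) RS (n + 1) =
      greedyStep G f (copPos (greedy G c₀ f) RS n) (robPos (greedy G c₀ f) RS n) :=
  rfl

end CopStrategy

lemma Set.ncard_le_card_of_subset_fst_fiber {α β : Type*} [Fintype β] {s : Set (α × β)}
    {a : α} (hs : s ⊆ {p | p.1 = a}) : s.ncard ≤ Fintype.card β := by
  rw [← Nat.card_eq_fintype_card, ← Set.ncard_univ]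
  refine Set.ncard_le_ncard_of_injOn Prod.snd (fun _ _ => Set.mem_univ _) ?_ Set.finite_univ
  intro p hp q hq hpq
  exact Prod.ext ((hs hp).trans (hs hq).symm) hpq

section Shadow

variable {α β : Type*} {G : SimpleGraph α} {H : SimpleGraph β} {u : α}

lemma boxProd_eq_or_adj_of_universal (hu : ∀ w, w ≠ u → G.Adj u w) (x : α) (y : β) :
    (x, y) = (u, y) ∨ (G □ H).Adj (u, y) (x, y) := by
  by_cases hx : x = u
  · exact Or.inl (by rw [hx])
  · exact Or.inr (boxProd_adj_left.mpr (hu x hx))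

noncomputable def shadowStrategy (G : SimpleGraph α) (H : SimpleGraph β) (u : α) (v : β) :
    CopStrategy (α × β) :=
  CopStrategy.greedy (G □ H) (u, v) fun _ r => (u, r.2)

variable {v : β} {RS : RobberStrategy (α × β)}

lemma shadowStrategy_captures (hu : ∀ w, w ≠ u → G.Adj u w) {n : ℕ}
    (hc : copPos (shadowStrategy G H u v) RS n = (u, (robPos (shadowStrategy G H u v) RS n).2)) :
    copPos (shadowStrategy G H u v) RS (n + 1) = robPos (shadowStrategy G H u v) RS n := by
  rw [shadowStrategy] at hc ⊢
  rw [CopStrategy.copPos_succ_greedy, hc]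
  exact CopStrategy.greedyStep_of_near (boxProd_eq_or_adj_of_universal hu _ _)

lemma shadowStrategy_follows {n : ℕ} {y : β}
    (hc : copPos (shadowStrategy G H u v) RS n = (u, y))
    (hy : H.Adj y (robPos (shadowStrategy G H u v) RS n).2)
    (hcap : copPos (shadowStrategy G H u v) RS (n + 1) ≠ robPos (shadowStrategy G H u v) RS n) :
    copPos (shadowStrategy G H u v) RS (n + 1) = (u, (robPos (shadowStrategy G H u v) RS n).2) := by
  rw [shadowStrategy] at hc hy hcap ⊢
  rw [CopStrategy.copPos_succ_greedy, hc] at hcap ⊢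
  have hfar := fun h => hcap (CopStrategy.greedyStep_of_near h)
  exact CopStrategy.greedyStep_of_not_near hfar (Or.inr (boxProd_adj_right.mpr hy))

lemma shadowStrategy_invariant (hu : ∀ w, w ≠ u → G.Adj u w)
    (hv : ∀ w, w ≠ v → H.Adj v w)
    (hRS : RS.Legal (G □ H)) (n : ℕ)
    (hn : ∀ k ≤ n,
      copPos (shadowStrategy G H u v) RS (k + 1) ≠ robPos (shadowStrategy G H u v) RS k) :
    copPos (shadowStrategy G H u v) RS (n + 1) = (u, (robPos (shadowStrategy G H u v) RS n).2) ∧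
      (robPos (shadowStrategy G H u v) RS n).1 = (robPos (shadowStrategy G H u v) RS 0).1 := by
  set r := robPos (shadowStrategy G H u v) RS
  induction n with
  | zero =>
    have hc : copPos (shadowStrategy G H u v) RS 0 = (u, v) := rfl
    by_cases hy : (r 0).2 = v
    · exact absurd (shadowStrategy_captures hu (by rw [hc, hy])) (hn 0 le_rfl)
    · exact ⟨shadowStrategy_follows hc (hv _ hy) (hn 0 le_rfl), rfl⟩
  | succ n ih =>
    obtain ⟨hc, hfst⟩ := ih fun k hk => hn k (by omega)
    by_cases hy : (r (n + 1)).2 = (r n).2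
    · exact absurd (shadowStrategy_captures hu (by rw [hc, hy])) (hn (n + 1) le_rfl)
    · have hmove : H.Adj (r n).2 (r (n + 1)).2 ∧ (r n).1 = (r (n + 1)).1 := by
        rcases hRS.robPos_succ (shadowStrategy G H u v) n with h | h
        · exact absurd (congrArg Prod.snd h) hy
        · exact (boxProd_adj.mp h).resolve_left fun h' => hy h'.2.symm
      exact ⟨shadowStrategy_follows hc hmove.1 (hn (n + 1) le_rfl), hmove.2.symm.trans hfst⟩

lemma damageSet_shadowStrategy_subset (hu : ∀ w, w ≠ u → G.Adj u w)
    (hv : ∀ w, w ≠ v → H.Adj v w) (hRS : RS.Legal (G □ H)) :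
    damageSet (shadowStrategy G H u v) RS ⊆
      {p | p.1 = (robPos (shadowStrategy G H u v) RS 0).1} := by
  rintro _ ⟨n, rfl, hn⟩
  exact (shadowStrategy_invariant hu hv hRS n fun k hk => (hn k hk).2).2

lemma dmg_boxProd_le_card_right [Fintype β] (hu : ∀ w, w ≠ u → G.Adj u w)
    (hv : ∀ w, w ≠ v → H.Adj v w) : dmg (G □ H) ≤ Fintype.card β :=
  Nat.sInf_le ⟨shadowStrategy G H u v, CopStrategy.greedy_legal, fun _ hRS =>
    Set.ncard_le_card_of_subset_fst_fiber (damageSet_shadowStrategy_subset hu hv hRS)⟩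

end Shadow

theorem dmg_boxProd_le_min_of_universal_general {α β : Type*} [Fintype α] [Fintype β]
    (G : SimpleGraph α) (H : SimpleGraph β)
    (hu : ∃ u : α, ∀ w : α, w ≠ u → G.Adj u w)
    (hv : ∃ v : β, ∀ w : β, w ≠ v → H.Adj v w) :
    dmg (G □ H) ≤ min (Fintype.card α) (Fintype.card β) := by
  obtain ⟨u, hu⟩ := hu
  obtain ⟨v, hv⟩ := hv
  refine le_min ?_ (dmg_boxProd_le_card_right hu hv)
  rw [dmg_congr (boxProdComm G H)]
  exact dmg_boxProd_le_card_right hv hu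

/-- If `G` and `H` are finite connected graphs both having a universal vertex, then
`dmg(G □ H) ≤ min {|V(G)|, |V(H)|}`. -/
theorem dmg_boxProd_le_min_of_universal {α β : Type*} [Fintype α] [Fintype β]
    (G : SimpleGraph α) (H : SimpleGraph β) (hG : G.Connected) (hH : H.Connected)
    (hu : ∃ u : α, ∀ w : α, w ≠ u → G.Adj u w)
    (hv : ∃ v : β, ∀ w : β, w ≠ v → H.Adj v w) :
    dmg (G □ H) ≤ min (Fintype.card α) (Fintype.card β) :=
  dmg_boxProd_le_min_of_universal_general G H hu hv
end

section
/- Let K_m and K_n be complete graphs on m and n vertices, respectively. If n ≥ m ≥ 3, then dmg(K_m □ K_n) = m. -/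
open SimpleGraph

variable {V : Type*}

/-!
A cop that captures the robber whenever they share a line, and otherwise steps into the robber's
row, pins the robber to one column: after every cop move the robber is in the cop's row, so a
robber changing column stays in that row and is caught next. It thus damages only vertices of its
starting column, at most `m` of them.

Conversely, a robber sharing no line with the cop cannot be caught by the cop's next move, and
after that move it has at least `m - 1` neighbours sharing no line with the cop (`m - 1` or
`n - 1` if the cop shares a line with it, `(m - 2) + (n - 2)` otherwise). While it has visited
fewer than `m` vertices one of these is new, so it damages `m` distinct vertices.
-/

section Play

variable {V : Type*} {G : SimpleGraph V} (CS : CopStrategy V) (RS : RobberStrategy V)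

/-- The robber's positions before round `t`, most recent first. -/
def robHistory (t : ℕ) : List V := (play CS RS t).2.2.2

theorem robHistory_succ (t : ℕ) :
    robHistory CS RS (t + 1) = robPos CS RS t :: robHistory CS RS t := rfl

theorem length_robHistory (t : ℕ) : (robHistory CS RS t).length = t := by
  induction t with
  | zero => rfl
  | succ t ih => rw [robHistory_succ, List.length_cons, ih]

theorem mem_robHistory {t : ℕ} {v : V} :
    v ∈ robHistory CS RS t ↔ ∃ j < t, robPos CS RS j = v := by
  induction t with
  | zero => simp [robHistory, play]
  | succ t ih =>
    rw [robHistory_succ, List.mem_cons, ih]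
    constructor
    · rintro (rfl | ⟨j, hj, rfl⟩)
      exacts [⟨t, t.lt_succ_self, rfl⟩, ⟨j, by omega, rfl⟩]
    · rintro ⟨j, hj, rfl⟩
      rcases (Nat.lt_succ_iff_lt_or_eq.mp hj) with hj | rfl
      exacts [Or.inr ⟨j, hj, rfl⟩, Or.inl rfl]

theorem copPos_succ_eq_or_adj (hCS : CS.Legal G) (t : ℕ) :
    copPos CS RS (t + 1) = copPos CS RS t ∨ G.Adj (copPos CS RS t) (copPos CS RS (t + 1)) :=
  hCS _ _ _

theorem robPos_succ_eq_or_adj (hRS : RS.Legal G) (t : ℕ) :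
    robPos CS RS (t + 1) = robPos CS RS t ∨ G.Adj (robPos CS RS t) (robPos CS RS (t + 1)) :=
  hRS _ _ _

end Play

theorem dmg_eq_of_forall {V : Type*} {G : SimpleGraph V} {k : ℕ} {CS : CopStrategy V}
    (hCS : CS.Legal G) (hle : ∀ RS : RobberStrategy V, RS.Legal G → (damageSet CS RS).ncard ≤ k)
    (hge : ∀ CS : CopStrategy V, CS.Legal G →
      ∃ RS : RobberStrategy V, RS.Legal G ∧ k ≤ (damageSet CS RS).ncard) :
    dmg G = k := by
  have hk : k ∈ {n | ∃ CS : CopStrategy V, CS.Legal G ∧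
      ∀ RS : RobberStrategy V, RS.Legal G → (damageSet CS RS).ncard ≤ n} := ⟨CS, hCS, hle⟩
  refine le_antisymm (Nat.sInf_le hk) (le_csInf ⟨k, hk⟩ ?_)
  rintro b ⟨CS', hCS', hb⟩
  obtain ⟨RS, hRS, hkRS⟩ := hge CS' hCS'
  exact hkRS.trans (hb RS hRS)

section FleeingRobber

variable {V : Type*} (G : SimpleGraph V)

def OutOfReach (c v : V) : Prop := c ≠ v ∧ ¬G.Adj c v

def escapeSet (c r : V) : Set V := {v | G.Adj r v ∧ OutOfReach G c v}

open Classical in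
noncomputable def fleeingRobber [Nonempty V] : RobberStrategy V where
  init c := Classical.epsilon (OutOfReach G c)
  move ch rh := match ch, rh with
    | c :: _, r :: _ => if h : ∃ v ∈ escapeSet G c r, v ∉ rh then h.choose else r
    | [], r :: _ => r -- this branch and the next one never occur in a play
    | _, [] => Classical.arbitrary V

variable {G}

theorem fleeingRobber_legal [Nonempty V] : (fleeingRobber G).Legal G := by
  rintro r (_ | ⟨c, ch⟩) rh
  · exact Or.inl rfl
  · dsimp only [fleeingRobber]
    split_ifs with h
    exacts [Or.inr h.choose_spec.1.1, Or.inl rfl]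

theorem copPos_succ_ne_of_outOfReach {CS : CopStrategy V} {RS : RobberStrategy V}
    (hCS : CS.Legal G) {t : ℕ} (h : OutOfReach G (copPos CS RS t) (robPos CS RS t)) :
    copPos CS RS (t + 1) ≠ robPos CS RS t := by
  intro hcap
  rcases copPos_succ_eq_or_adj CS RS hCS t with hc | hc
  · exact h.1 (hc ▸ hcap)
  · exact h.2 (hcap ▸ hc)

theorem exists_mem_escapeSet_notMem_cons [Finite V] {c r : V} {W : List V}
    (hW : W.length < (escapeSet G c r).ncard) : ∃ v ∈ escapeSet G c r, v ∉ r :: W := by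
  classical
  have hlt : (W.toFinset : Set V).ncard < (escapeSet G c r).ncard := by
    rw [Set.ncard_coe_finset]
    exact (List.toFinset_card_le W).trans_lt hW
  obtain ⟨v, hv, hvW⟩ := Set.exists_mem_notMem_of_ncard_lt_ncard hlt
  refine ⟨v, hv, List.not_mem_cons_of_ne_of_not_mem ?_ (by simpa using hvW)⟩
  exact (G.ne_of_adj hv.1).symm

variable [Nonempty V] {k : ℕ} (hstart : ∀ c, ∃ v, OutOfReach G c v)
  (hescape : ∀ c r, c ≠ r → k - 1 ≤ (escapeSet G c r).ncard)
  {CS : CopStrategy V} (hCS : CS.Legal G)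
include hstart hescape hCS

theorem outOfReach_and_nodup_fleeingRobber [Finite V] {t : ℕ} (ht : t < k) :
    OutOfReach G (copPos CS (fleeingRobber G) t) (robPos CS (fleeingRobber G) t) ∧
      (robHistory CS (fleeingRobber G) (t + 1)).Nodup := by
  induction t with
  | zero => exact ⟨Classical.epsilon_spec (hstart _), List.nodup_singleton _⟩
  | succ t ih =>
    obtain ⟨hreach, hnodup⟩ := ih (by omega)
    have hfresh : ∃ v ∈ escapeSet G (copPos CS (fleeingRobber G) (t + 1))
        (robPos CS (fleeingRobber G) t),
          v ∉ robPos CS (fleeingRobber G) t :: robHistory CS (fleeingRobber G) t := by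
      refine exists_mem_escapeSet_notMem_cons (lt_of_lt_of_le ?_ (hescape _ _
        (copPos_succ_ne_of_outOfReach hCS hreach)))
      rw [length_robHistory]
      omega
    have hmove : robPos CS (fleeingRobber G) (t + 1) = hfresh.choose := dif_pos hfresh
    rw [robHistory_succ (t := t + 1), List.nodup_cons, hmove]
    exact ⟨hfresh.choose_spec.1.2, hfresh.choose_spec.2, hnodup⟩

theorem le_ncard_damageSet_fleeingRobber [Finite V] :
    k ≤ (damageSet CS (fleeingRobber G)).ncard := by
  classical
  obtain _ | k := k
  · exact Nat.zero_le _
  have hinv := fun t (ht : t < k + 1) =>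
    outOfReach_and_nodup_fleeingRobber hstart hescape hCS ht
  have hsub : ((robHistory CS (fleeingRobber G) (k + 1)).toFinset : Set V) ⊆
      damageSet CS (fleeingRobber G) := by
    intro v hv
    obtain ⟨t, ht, rfl⟩ := (mem_robHistory _ _).mp (List.mem_toFinset.mp hv)
    exact ⟨t, rfl, fun j hj =>
      ⟨(hinv j (by omega)).1.1, copPos_succ_ne_of_outOfReach hCS (hinv j (by omega)).1⟩⟩
  calc k + 1 = (robHistory CS (fleeingRobber G) (k + 1)).toFinset.card := by
        rw [List.toFinset_card_of_nodup (hinv k k.lt_succ_self).2, length_robHistory]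
    _ ≤ (damageSet CS (fleeingRobber G)).ncard := by
        rw [← Set.ncard_coe_finset]
        exact Set.ncard_le_ncard hsub

end FleeingRobber

section RookGraph

variable {α β : Type*}

theorem outOfReach_boxProd_top_iff {c v : α × β} :
    OutOfReach ((⊤ : SimpleGraph α) □ (⊤ : SimpleGraph β)) c v ↔ c.1 ≠ v.1 ∧ c.2 ≠ v.2 := by
  simp only [OutOfReach, boxProd_adj, top_adj, Ne, Prod.ext_iff]
  tauto

theorem snd_eq_of_fst_ne {u v : α × β}
    (h : v = u ∨ ((⊤ : SimpleGraph α) □ (⊤ : SimpleGraph β)).Adj u v) (hne : u.1 ≠ v.1) :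
    u.2 = v.2 := by
  rcases h with rfl | h
  · rfl
  · simp only [boxProd_adj, top_adj] at h
    tauto

section LineChaser

variable [DecidableEq α] [DecidableEq β]

def chase (c r : α × β) : α × β := if c.1 = r.1 ∨ c.2 = r.2 then r else (r.1, c.2)

theorem fst_chase (c r : α × β) : (chase c r).1 = r.1 := by
  unfold chase
  split_ifs <;> rfl

theorem chase_eq_or_adj (c r : α × β) :
    chase c r = c ∨ ((⊤ : SimpleGraph α) □ (⊤ : SimpleGraph β)).Adj c (chase c r) := by
  unfold chase
  split_ifs with h
  · by_cases hcr : c = r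
    · exact Or.inl hcr.symm
    · simp only [Prod.ext_iff] at hcr
      simp only [boxProd_adj, top_adj]
      tauto
  · simp only [not_or] at h
    exact Or.inr (boxProd_adj.mpr (Or.inl ⟨h.1, rfl⟩))

theorem fst_ne_of_chase_ne {c r : α × β} (h : chase c r ≠ r) : c.1 ≠ r.1 := by
  unfold chase at h
  split_ifs at h with hcr
  · exact absurd rfl h
  · exact fun e => hcr (Or.inl e)

def lineChaser (c₀ : α × β) : CopStrategy (α × β) where
  init := c₀
  move ch rh := match ch, rh with
    | c :: _, r :: _ => chase c r
    | c :: _, [] => c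
    | [], _ => c₀

theorem lineChaser_legal (c₀ : α × β) :
    (lineChaser c₀).Legal ((⊤ : SimpleGraph α) □ (⊤ : SimpleGraph β)) := by
  rintro c ch (_ | ⟨r, rh⟩)
  · exact Or.inl rfl
  · exact chase_eq_or_adj c r

variable {c₀ : α × β} {RS : RobberStrategy (α × β)}

theorem copPos_lineChaser_succ (t : ℕ) :
    copPos (lineChaser c₀) RS (t + 1) =
      chase (copPos (lineChaser c₀) RS t) (robPos (lineChaser c₀) RS t) := rfl

theorem snd_robPos_lineChaser
    (hRS : RS.Legal ((⊤ : SimpleGraph α) □ (⊤ : SimpleGraph β))) {t : ℕ}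
    (h : ∀ j ≤ t, copPos (lineChaser c₀) RS (j + 1) ≠ robPos (lineChaser c₀) RS j) :
    (robPos (lineChaser c₀) RS t).2 = (robPos (lineChaser c₀) RS 0).2 := by
  induction t with
  | zero => rfl
  | succ t ih =>
    have hrow : (robPos (lineChaser c₀) RS t).1 ≠ (robPos (lineChaser c₀) RS (t + 1)).1 := by
      have hmiss := h (t + 1) le_rfl
      rw [copPos_lineChaser_succ] at hmiss
      rw [← fst_chase (copPos (lineChaser c₀) RS t)]
      exact fst_ne_of_chase_ne hmiss
    rw [← snd_eq_of_fst_ne (robPos_succ_eq_or_adj _ RS hRS t) hrow]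
    exact ih fun j hj => h j (by omega)

theorem ncard_damageSet_lineChaser_le [Finite α] [Finite β]
    (hRS : RS.Legal ((⊤ : SimpleGraph α) □ (⊤ : SimpleGraph β))) :
    (damageSet (lineChaser c₀) RS).ncard ≤ Nat.card α := by
  have hsub : damageSet (lineChaser c₀) RS ⊆
      Set.univ ×ˢ {(robPos (lineChaser c₀) RS 0).2} := by
    rintro _ ⟨t, rfl, ht⟩
    exact ⟨Set.mem_univ _, snd_robPos_lineChaser hRS fun j hj => (ht j hj).2⟩
  calc (damageSet (lineChaser c₀) RS).ncard
      ≤ (Set.univ ×ˢ {(robPos (lineChaser c₀) RS 0).2} : Set (α × β)).ncard :=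
        Set.ncard_le_ncard hsub
    _ = Nat.card α := by rw [Set.ncard_prod, Set.ncard_univ, Set.ncard_singleton, mul_one]

end LineChaser

theorem exists_outOfReach_boxProd_top [Nontrivial α] [Nontrivial β] (c : α × β) :
    ∃ v, OutOfReach ((⊤ : SimpleGraph α) □ (⊤ : SimpleGraph β)) c v := by
  obtain ⟨a, ha⟩ := exists_ne c.1
  obtain ⟨b, hb⟩ := exists_ne c.2
  exact ⟨(a, b), outOfReach_boxProd_top_iff.mpr ⟨Ne.symm ha, Ne.symm hb⟩⟩

theorem sub_two_le_ncard_compl_pair [Finite α] (a b : α) :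
    Nat.card α - 2 ≤ ({a, b}ᶜ : Set α).ncard := by
  rw [Set.ncard_compl]
  have := (Set.ncard_insert_le a {b}).trans_eq (by rw [Set.ncard_singleton])
  omega

theorem le_ncard_escapeSet_boxProd_top [Finite α] [Finite β] (hβ : 3 ≤ Nat.card β)
    (hαβ : Nat.card α ≤ Nat.card β) {c r : α × β} (hcr : c ≠ r) :
    Nat.card α - 1 ≤ (escapeSet ((⊤ : SimpleGraph α) □ (⊤ : SimpleGraph β)) c r).ncard := by
  set E := escapeSet ((⊤ : SimpleGraph α) □ (⊤ : SimpleGraph β)) c r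
  have hcol : r.2 ≠ c.2 → ({r.1, c.1}ᶜ : Set α) ×ˢ {r.2} ⊆ E := by
    rintro h2 ⟨i, j⟩ ⟨hi, rfl⟩
    simp only [Set.mem_compl_iff, Set.mem_insert_iff, Set.mem_singleton_iff, not_or] at hi
    refine ⟨boxProd_adj.mpr (Or.inl ⟨Ne.symm hi.1, rfl⟩), outOfReach_boxProd_top_iff.mpr ?_⟩
    exact ⟨Ne.symm hi.2, Ne.symm h2⟩
  have hrow : r.1 ≠ c.1 → ({r.1} : Set α) ×ˢ ({r.2, c.2}ᶜ : Set β) ⊆ E := by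
    rintro h1 ⟨i, j⟩ ⟨rfl, hj⟩
    simp only [Set.mem_compl_iff, Set.mem_insert_iff, Set.mem_singleton_iff, not_or] at hj
    refine ⟨boxProd_adj.mpr (Or.inr ⟨Ne.symm hj.1, rfl⟩), outOfReach_boxProd_top_iff.mpr ?_⟩
    exact ⟨Ne.symm h1, Ne.symm hj.2⟩
  by_cases h1 : r.1 = c.1
  · have h2 : r.2 ≠ c.2 := fun h2 => hcr (Prod.ext h1.symm h2.symm)
    calc Nat.card α - 1 = (({r.1, c.1}ᶜ : Set α) ×ˢ ({r.2} : Set β)).ncard := by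
          rw [h1, Set.pair_eq_singleton, Set.ncard_prod, Set.ncard_compl, Set.ncard_singleton,
            Set.ncard_singleton, mul_one]
      _ ≤ E.ncard := Set.ncard_le_ncard (hcol h2)
  by_cases h2 : r.2 = c.2
  · calc Nat.card α - 1 ≤ Nat.card β - 1 := Nat.sub_le_sub_right hαβ 1
      _ = (({r.1} : Set α) ×ˢ ({r.2, c.2}ᶜ : Set β)).ncard := by
          rw [h2, Set.pair_eq_singleton, Set.ncard_prod, Set.ncard_compl, Set.ncard_singleton,
            Set.ncard_singleton, one_mul]
      _ ≤ E.ncard := Set.ncard_le_ncard (hrow h1)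
  have hdisj : Disjoint (({r.1, c.1}ᶜ : Set α) ×ˢ ({r.2} : Set β))
      (({r.1} : Set α) ×ˢ ({r.2, c.2}ᶜ : Set β)) :=
    Set.disjoint_left.mpr fun v hv hv' => hv.1 (Or.inl hv'.1)
  calc Nat.card α - 1 ≤ (Nat.card α - 2) + (Nat.card β - 2) := by omega
    _ ≤ (({r.1, c.1}ᶜ : Set α) ×ˢ ({r.2} : Set β)).ncard +
        (({r.1} : Set α) ×ˢ ({r.2, c.2}ᶜ : Set β)).ncard := by
        rw [Set.ncard_prod, Set.ncard_prod, Set.ncard_singleton, Set.ncard_singleton, mul_one,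
          one_mul]
        exact add_le_add (sub_two_le_ncard_compl_pair _ _) (sub_two_le_ncard_compl_pair _ _)
    _ = _ := (Set.ncard_union_eq hdisj).symm
    _ ≤ E.ncard := Set.ncard_le_ncard (Set.union_subset (hcol h2) (hrow h1))

end RookGraph

/-- If `n ≥ m ≥ 3`, then `dmg(K_m □ K_n) = m`. -/
theorem dmg_boxProd_complete {m n : ℕ} (hm : 3 ≤ m) (hmn : m ≤ n) :
    dmg ((⊤ : SimpleGraph (Fin m)) □ (⊤ : SimpleGraph (Fin n))) = m := by
  have : Nontrivial (Fin m) := Fin.nontrivial_iff_two_le.mpr (by omega)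
  have : Nontrivial (Fin n) := Fin.nontrivial_iff_two_le.mpr (by omega)
  have hescape (c r : Fin m × Fin n) (hcr : c ≠ r) :
      m - 1 ≤ (escapeSet ((⊤ : SimpleGraph (Fin m)) □ (⊤ : SimpleGraph (Fin n))) c r).ncard := by
    simpa using le_ncard_escapeSet_boxProd_top (by simpa using hm.trans hmn) (by simpa) hcr
  refine dmg_eq_of_forall (lineChaser_legal (⟨0, by omega⟩, ⟨0, by omega⟩))
    (fun RS hRS => Nat.card_fin m ▸ ncard_damageSet_lineChaser_le hRS) fun CS hCS => ?_
  exact ⟨fleeingRobber _, fleeingRobber_legal,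
    le_ncard_damageSet_fleeingRobber exists_outOfReach_boxProd_top hescape hCS⟩
end
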